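/- arXiv:2404.17339 — 4 statements merged into one kernel-verified Lean document; each statement's English description precedes it below -/
import Mathlib

section
/- Let N ≥ 2 and M ≥ 2. Suppose complex vectors (α₁,...,α_M) and (β₁,...,β_M) satisfy α₁^{n₁}·α₂^{n₂}···α_M^{n_M} = e^{iθ}·β₁^{n₁}·β₂^{n₂}···β_M^{n_M} for a fixed θ ∈ ℝ and for all tuples of nonnegative integers (n₁,...,n_M) with n₁+...+n_M = N, and suppose all β_i are nonzero. Then there exists φ ∈ ℝ with α_i = e^{iφ}·β_i for all i. -/
open Complex

lemma prod_pow_pair {M N : ℕ} (f : Fin M → ℂ) (i : Fin M) [NeZero M] (hi : i ≠ 0) :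
    ∏ j, f j ^ (if j = 0 then N - 1 else if j = i then 1 else 0) =
      f 0 ^ (N - 1) * f i := by
  rw [← Finset.prod_subset (Finset.subset_univ ({0, i} : Finset (Fin M)))
    (by intro x _ hx; simp only [Finset.mem_insert, Finset.mem_singleton, not_or] at hx
        simp [hx.1, hx.2])]
  rw [Finset.prod_pair (Ne.symm hi)]
  simp [hi, Ne.symm hi]

/-- If all degree-N monomials in α agree with those in β up to a fixed phase e^{iθ},
and all β_i are nonzero, then α = e^{iφ} β for some real φ. -/
theorem stmt_1 (N M : ℕ) (hN : 2 ≤ N) (hM : 2 ≤ M) (θ : ℝ)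
    (α β : Fin M → ℂ) (hβ : ∀ i, β i ≠ 0)
    (hmon : ∀ n : Fin M → ℕ, (∑ i, n i) = N →
      (∏ i, α i ^ n i) = Complex.exp (θ * Complex.I) * ∏ i, β i ^ n i) :
    ∃ φ : ℝ, ∀ i, α i = Complex.exp (φ * Complex.I) * β i := by
  haveI : NeZero M := ⟨by omega⟩
  set z := Complex.exp (θ * Complex.I) with hzdef
  have hz : z ≠ 0 := Complex.exp_ne_zero _
  -- monomial N·e₀
  have h1 : α 0 ^ N = z * β 0 ^ N := by
    have := hmon (fun j => if j = 0 then N else 0) (by simp)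
    simpa [pow_ite, Finset.prod_ite_eq'] using this
  -- monomial (N-1)·e₀ + eᵢ, i ≠ 0
  have h2 : ∀ i : Fin M, i ≠ 0 →
      α 0 ^ (N - 1) * α i = z * (β 0 ^ (N - 1) * β i) := by
    intro i hi
    have hsum : (∑ j, (if j = 0 then N - 1 else if j = i then 1 else 0)) = N := by
      rw [← Finset.sum_subset (Finset.subset_univ ({0, i} : Finset (Fin M)))
        (by intro x _ hx; simp only [Finset.mem_insert, Finset.mem_singleton, not_or] at hx
            simp [hx.1, hx.2])]
      rw [Finset.sum_pair (Ne.symm hi)]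
      simp [hi, Ne.symm hi]; omega
    have := hmon _ hsum
    rwa [prod_pow_pair α i hi, prod_pow_pair β i hi] at this
  -- γ := α 0 / β 0
  set γ := α 0 / β 0 with hγdef
  have hβ0 := hβ 0
  have hα0 : α 0 ≠ 0 := by
    intro h
    have : (0 : ℂ) = z * β 0 ^ N := by
      rw [← h1, h, zero_pow (by omega)]
    exact (mul_ne_zero hz (pow_ne_zero _ hβ0)) this.symm
  have hγN : γ ^ N = z := by
    rw [hγdef, div_pow, div_eq_iff (pow_ne_zero _ hβ0)]
    rw [h1]
  have hγabs : ‖γ‖ = 1 := by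
    have h : ‖γ‖ ^ N = 1 := by
      rw [← norm_pow, hγN, hzdef]
      simpa using Complex.norm_exp (θ * Complex.I)
    have hnn : (0:ℝ) ≤ ‖γ‖ := norm_nonneg _
    rcases lt_trichotomy ‖γ‖ 1 with h' | h' | h'
    · have := pow_lt_one₀ hnn h' (by omega : N ≠ 0)
      rw [h] at this; exact absurd this (lt_irrefl 1)
    · exact h'
    · have := one_lt_pow₀ h' (by omega : N ≠ 0)
      rw [h] at this; exact absurd this (lt_irrefl 1)
  refine ⟨Complex.arg γ, fun i => ?_⟩
  have hγexp : Complex.exp (↑(Complex.arg γ) * Complex.I) = γ := by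
    have := Complex.norm_mul_exp_arg_mul_I γ
    rwa [hγabs, ofReal_one, one_mul] at this
  rw [hγexp]
  by_cases hi : i = 0
  · subst hi
    rw [hγdef, div_mul_cancel₀ _ hβ0]
  · have h2i := h2 i hi
    obtain ⟨K, hK⟩ : ∃ K, N = K + 1 := ⟨N - 1, by omega⟩
    have hNK : N - 1 = K := by omega
    rw [hNK] at h2i
    rw [hK] at hγN
    have key : α i * (α 0 ^ K * β 0) = γ * β i * (α 0 ^ K * β 0) := by
      have hγ' : γ * β 0 = α 0 := by rw [hγdef, div_mul_cancel₀ _ hβ0]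
      calc α i * (α 0 ^ K * β 0) = (α 0 ^ K * α i) * β 0 := by ring
        _ = z * (β 0 ^ K * β i) * β 0 := by rw [h2i]
        _ = γ ^ (K + 1) * (β 0 ^ K * β i) * β 0 := by rw [hγN]
        _ = γ * β i * ((γ * β 0) ^ K * β 0) := by rw [pow_succ, mul_pow]; ring
        _ = γ * β i * (α 0 ^ K * β 0) := by rw [hγ']
    exact mul_right_cancel₀ (mul_ne_zero (pow_ne_zero _ hα0) hβ0) key
end

section
/- Let N ≥ 2 and let β₀, β₁, ..., β_N be complex numbers satisfying β_{s+1}² = β_s · β_{s+2} · √((s+2)/(s+1)) · √((N−s)/(N−s−1)) for all s = 0, 1, ..., N−2, and additionally satisfying: if β₁ = ... = β_{N−1} = 0 then β₀ = 0 or β_N = 0. Then there exist complex numbers U₁, U₂ such that β_n = (binom(N,n))^{1/2} · U₁^n · U₂^{N−n} for all n = 0, ..., N. -/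
/-!
Dividing out the binomial weights, `γ n = β n / √(N choose n)`, turns the recurrence into
`γ (s+1)^2 = γ s * γ (s+2)`, because `√(N choose s) √(N choose (s+2))` times the two square-root
factors is exactly `N choose (s+1)`. If some inner `γ j` is nonzero, the relation propagates
non-vanishing down to `γ 0` and `γ 1`, and then forces `γ` to be geometric, `γ n = γ 0 r^n`; taking
an `N`-th root `U₂` of `γ 0` gives `γ n = (r U₂)^n U₂^(N-n)`. If all inner values vanish, one of the
endpoints does too, and `γ` is a pure power `U^n 0^(N-n)` or `0^n U^(N-n)`.
-/

open Real

section GeometricSequence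

variable {G : Type*} {γ : ℕ → G} {N : ℕ}

theorem ne_zero_of_le_of_sq_eq_mul [MonoidWithZero G] [NoZeroDivisors G]
    (hγ : ∀ s, s + 2 ≤ N → γ (s + 1) ^ 2 = γ s * γ (s + 2)) {j : ℕ} (hjN : j + 1 ≤ N)
    (hj : γ j ≠ 0) : ∀ i ≤ j, γ i ≠ 0 := by
  induction j with
  | zero => intro i hi; rwa [Nat.le_zero.mp hi]
  | succ j ih =>
    have hj' : γ j ≠ 0 := by
      intro h
      exact hj (pow_eq_zero_iff two_ne_zero |>.mp (by rw [hγ j hjN, h, zero_mul]))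
    intro i hi
    rcases Nat.lt_or_eq_of_le hi with hi | rfl
    · exact ih (by omega) hj' i (by omega)
    · exact hj

theorem eq_mul_div_pow_of_sq_eq_mul [Field G]
    (hγ : ∀ s, s + 2 ≤ N → γ (s + 1) ^ 2 = γ s * γ (s + 2)) (h0 : γ 0 ≠ 0) (h1 : γ 1 ≠ 0) :
    ∀ n ≤ N, γ n = γ 0 * (γ 1 / γ 0) ^ n := by
  intro n
  induction n using Nat.twoStepInduction with
  | zero => simp
  | one => intro; rw [pow_one, mul_div_cancel₀ _ h0]
  | more k ihk ihk1 =>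
    intro hk
    have hne : γ 0 * (γ 1 / γ 0) ^ k ≠ 0 := mul_ne_zero h0 (pow_ne_zero _ (div_ne_zero h1 h0))
    have hrec := hγ k hk
    rw [ihk (by omega), ihk1 (by omega)] at hrec
    refine (mul_left_cancel₀ hne ?_).symm
    rw [← hrec]
    ring

end GeometricSequence

section PowMulPow

variable {K : Type*} [Field K] [IsAlgClosed K] {γ : ℕ → K} {N : ℕ}

theorem exists_eq_pow_mul_pow_of_forall_lt_eq_zero (hN : 0 < N) (h : ∀ n < N, γ n = 0) :
    ∃ U₁ U₂ : K, ∀ n ≤ N, γ n = U₁ ^ n * U₂ ^ (N - n) := by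
  obtain ⟨U, hU⟩ := IsAlgClosed.exists_pow_nat_eq (γ N) hN
  refine ⟨U, 0, fun n hn => ?_⟩
  rcases Nat.lt_or_eq_of_le hn with hn | rfl
  · rw [h n hn, zero_pow (by omega), mul_zero]
  · rw [hU, Nat.sub_self, pow_zero, mul_one]

theorem exists_eq_pow_mul_pow_of_forall_pos_eq_zero (hN : 0 < N)
    (h : ∀ n, 0 < n → n ≤ N → γ n = 0) :
    ∃ U₁ U₂ : K, ∀ n ≤ N, γ n = U₁ ^ n * U₂ ^ (N - n) := by
  obtain ⟨U, hU⟩ := IsAlgClosed.exists_pow_nat_eq (γ 0) hN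
  refine ⟨0, U, fun n hn => ?_⟩
  rcases Nat.eq_zero_or_pos n with rfl | hn0
  · rw [pow_zero, one_mul, Nat.sub_zero, hU]
  · rw [h n hn0 hn, zero_pow (by omega), zero_mul]

theorem exists_eq_pow_mul_pow_of_sq_eq_mul (hN : 0 < N)
    (hγ : ∀ s, s + 2 ≤ N → γ (s + 1) ^ 2 = γ s * γ (s + 2))
    (hends : (∀ j, 1 ≤ j → j ≤ N - 1 → γ j = 0) → γ 0 = 0 ∨ γ N = 0) :
    ∃ U₁ U₂ : K, ∀ n ≤ N, γ n = U₁ ^ n * U₂ ^ (N - n) := by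
  by_cases hinner : ∀ j, 1 ≤ j → j ≤ N - 1 → γ j = 0
  · rcases hends hinner with h0 | hN0
    · refine exists_eq_pow_mul_pow_of_forall_lt_eq_zero hN fun n hn => ?_
      rcases Nat.eq_zero_or_pos n with rfl | hn0
      exacts [h0, hinner n hn0 (by omega)]
    · refine exists_eq_pow_mul_pow_of_forall_pos_eq_zero hN fun n hn0 hn => ?_
      rcases Nat.lt_or_eq_of_le hn with hn | rfl
      exacts [hinner n hn0 (by omega), hN0]
  push Not at hinner
  obtain ⟨j, hj1, hjN, hj⟩ := hinner
  have hpos := ne_zero_of_le_of_sq_eq_mul hγ (by omega) hj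
  have h0 : γ 0 ≠ 0 := hpos 0 (Nat.zero_le j)
  obtain ⟨U₂, hU₂⟩ := IsAlgClosed.exists_pow_nat_eq (γ 0) hN
  refine ⟨γ 1 / γ 0 * U₂, U₂, fun n hn => ?_⟩
  rw [eq_mul_div_pow_of_sq_eq_mul hγ h0 (hpos 1 hj1) n hn, ← hU₂, mul_pow,
    ← Nat.sub_add_cancel hn, pow_add, Nat.add_sub_cancel]
  ring

end PowMulPow

theorem choose_succ_sq_mul (N s : ℕ) :
    N.choose (s + 1) ^ 2 * ((s + 1) * (N - (s + 1))) =
      N.choose s * N.choose (s + 2) * ((s + 2) * (N - s)) := by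
  calc N.choose (s + 1) ^ 2 * ((s + 1) * (N - (s + 1)))
      = (N.choose (s + 1) * (s + 1)) * (N.choose (s + 1) * (N - (s + 1))) := by ring
    _ = N.choose s * N.choose (s + 2) * ((s + 2) * (N - s)) := by
      rw [Nat.choose_succ_right_eq N s, ← Nat.choose_succ_right_eq N (s + 1)]; ring

theorem sqrt_mul_sqrt_mul_sqrt_choose_mul_sqrt_choose {N s : ℕ} (hs : s + 2 ≤ N) :
    √((s + 2 : ℝ) / (s + 1)) * √(((N : ℝ) - s) / ((N : ℝ) - s - 1)) *
      (√(N.choose s) * √(N.choose (s + 2))) = N.choose (s + 1) := by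
  have hcast : (N.choose (s + 1) : ℝ) ^ 2 * ((s + 1) * ((N : ℝ) - s - 1)) =
      N.choose s * N.choose (s + 2) * ((s + 2) * ((N : ℝ) - s)) := by
    have := congrArg (Nat.cast : ℕ → ℝ) (choose_succ_sq_mul N s)
    push_cast [Nat.cast_sub (by omega : s + 1 ≤ N), Nat.cast_sub (by omega : s ≤ N)] at this
    linear_combination this
  have hNs : (0 : ℝ) < (N : ℝ) - s - 1 := by
    have : ((s + 2 : ℕ) : ℝ) ≤ N := by exact_mod_cast hs
    push_cast at this; linarith
  have hratio : 0 ≤ ((s + 2 : ℝ) / (s + 1)) * (((N : ℝ) - s) / ((N : ℝ) - s - 1)) :=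
    mul_nonneg (by positivity) (div_nonneg (by linarith) hNs.le)
  rw [← Real.sqrt_mul (by positivity), ← Real.sqrt_mul (by positivity), ← Real.sqrt_mul hratio]
  convert Real.sqrt_sq (Nat.cast_nonneg (N.choose (s + 1))) using 2
  field_simp
  linear_combination -hcast

theorem ofReal_sqrt_choose_ne_zero {N n : ℕ} (hn : n ≤ N) : (√(N.choose n) : ℂ) ≠ 0 :=
  Complex.ofReal_ne_zero.mpr (Real.sqrt_ne_zero'.mpr (by exact_mod_cast Nat.choose_pos hn))

theorem div_sqrt_choose_sq_eq_mul {N : ℕ} {β : ℕ → ℂ} {s : ℕ} (hs : s + 2 ≤ N)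
    (hrec : β (s + 1) ^ 2 = β s * β (s + 2) *
        (Real.sqrt ((s + 2 : ℝ) / (s + 1)) : ℂ) *
        (Real.sqrt (((N : ℝ) - s) / ((N : ℝ) - s - 1)) : ℂ)) :
    (β (s + 1) / √(N.choose (s + 1))) ^ 2 =
      β s / √(N.choose s) * (β (s + 2) / √(N.choose (s + 2))) := by
  have hsq : (√(N.choose (s + 1)) : ℂ) ^ 2 =
      (√((s + 2 : ℝ) / (s + 1)) : ℂ) * (√(((N : ℝ) - s) / ((N : ℝ) - s - 1)) : ℂ) *
        ((√(N.choose s) : ℂ) * √(N.choose (s + 2))) := by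
    rw [← Complex.ofReal_pow, Real.sq_sqrt (Nat.cast_nonneg _),
      ← sqrt_mul_sqrt_mul_sqrt_choose_mul_sqrt_choose hs]
    push_cast
    ring
  have hc0 := ofReal_sqrt_choose_ne_zero (N := N) (n := s) (by omega)
  have hc2 := ofReal_sqrt_choose_ne_zero (N := N) (n := s + 2) hs
  obtain ⟨hw₁, hw₂⟩ := mul_ne_zero_iff.mp
    (left_ne_zero_of_mul (hsq ▸ pow_ne_zero 2 (ofReal_sqrt_choose_ne_zero (by omega))))
  rw [div_pow, hrec, hsq]
  field_simp

/-- Resolution of the Yurke–Stoler constraints: the recurrence together with the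
NOON condition forces the binomial (single-mode type) form of the coefficients. -/
theorem stmt_3 (N : ℕ) (hN : 2 ≤ N) (β : ℕ → ℂ)
    (hrec : ∀ s, s + 2 ≤ N →
      β (s + 1) ^ 2 = β s * β (s + 2) *
        (Real.sqrt ((s + 2 : ℝ) / (s + 1)) : ℂ) *
        (Real.sqrt (((N : ℝ) - s) / ((N : ℝ) - s - 1)) : ℂ))
    (hnoon : (∀ j, 1 ≤ j → j ≤ N - 1 → β j = 0) → β 0 = 0 ∨ β N = 0) :
    ∃ U₁ U₂ : ℂ, ∀ n ≤ N,
      β n = (Real.sqrt (N.choose n) : ℂ) * U₁ ^ n * U₂ ^ (N - n) := by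
  have hends : (∀ j, 1 ≤ j → j ≤ N - 1 → β j / √(N.choose j) = 0) →
      β 0 / √(N.choose 0) = 0 ∨ β N / √(N.choose N) = 0 := by
    intro h
    have hinner : ∀ j, 1 ≤ j → j ≤ N - 1 → β j = 0 := fun j hj1 hjN =>
      (div_eq_zero_iff.mp (h j hj1 hjN)).resolve_right (ofReal_sqrt_choose_ne_zero (by omega))
    rcases hnoon hinner with h0 | hN0
    exacts [Or.inl (by rw [h0, zero_div]), Or.inr (by rw [hN0, zero_div])]
  obtain ⟨U₁, U₂, hU⟩ := exists_eq_pow_mul_pow_of_sq_eq_mul (by omega)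
    (fun s hs => div_sqrt_choose_sq_eq_mul hs (hrec s hs)) hends
  refine ⟨U₁, U₂, fun n hn => ?_⟩
  rw [mul_assoc, ← hU n hn, mul_div_cancel₀ _ (ofReal_sqrt_choose_ne_zero hn)]
end

section
/- Let N ≥ 2 and β₀, ..., β_N ∈ ℂ satisfy the recurrence β_{s+2} = (β_{s+1}²/β_s) · √((s+1)/(s+2)) · √((N−s−1)/(N−s)) for s = 0, ..., N−2, where β₀ ≠ 0 and β₁ ≠ 0. Then setting U₂ = β₀^{1/N} (any fixed N-th root) and U₁ = β₁ / (√N · U₂^{N−1}), one has β_n = (binom(N,n))^{1/2} · U₁^n · U₂^{N−n} for all 0 ≤ n ≤ N. -/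
open Real

lemma nat_key (N s : ℕ) (h : s + 2 ≤ N) :
    (N.choose (s+1))^2 * (s+1) * (N-s-1) = N.choose (s+2) * N.choose s * ((s+2) * (N-s)) := by
  have A := Nat.choose_succ_right_eq N s
  have B := Nat.choose_succ_right_eq N (s+1)
  have e : (N.choose (s+1))^2 * (s+1) * (N-s-1)
      = (N.choose (s+1) * (s+1)) * (N.choose (s+1) * (N-(s+1))) := by
    rw [show N-s-1 = N-(s+1) by omega]; ring
  rw [e, A, ← B]; ring

lemma real_key (k k1 k2 s a b : ℕ) (hk : 0 < k) (hb : 0 < b)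
    (hkey : k1^2 * (s+1) * a = k2 * k * ((s+2) * b)) :
    (k1:ℝ) / Real.sqrt k * Real.sqrt ((s+1 : ℝ)/(s+2)) * Real.sqrt ((a:ℝ)/(b:ℝ))
      = Real.sqrt k2 := by
  have hkR : (0:ℝ) < k := by exact_mod_cast hk
  have hbR : (0:ℝ) < b := by exact_mod_cast hb
  have hkeyR : (k1:ℝ)^2 * ((s:ℝ)+1) * (a:ℝ) = (k2:ℝ) * (k:ℝ) * (((s:ℝ)+2) * (b:ℝ)) := by
    exact_mod_cast hkey
  have h1 : (k1:ℝ) / Real.sqrt k = Real.sqrt ((k1:ℝ)^2 / k) := by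
    rw [Real.sqrt_div (by positivity), Real.sqrt_sq (by positivity)]
  rw [h1, ← Real.sqrt_mul (by positivity), ← Real.sqrt_mul (by positivity)]
  congr 1
  have hs2 : (0:ℝ) < (s:ℝ) + 2 := by positivity
  field_simp
  linear_combination hkeyR

/-- If β₀, β₁ ≠ 0 and the β's solve the recurrence, then with U₂ any fixed N-th root
of β₀ and U₁ = β₁/(√N · U₂^{N−1}), one has β_n = binom(N,n)^{1/2}·U₁^n·U₂^{N−n}. -/
theorem stmt_4 (N : ℕ) (hN : 2 ≤ N) (β : ℕ → ℂ)
    (hβ0 : β 0 ≠ 0) (hβ1 : β 1 ≠ 0)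
    (hrec : ∀ s, s + 2 ≤ N →
      β (s + 2) = (β (s + 1) ^ 2 / β s) *
        (Real.sqrt ((s + 1 : ℝ) / (s + 2)) : ℂ) *
        (Real.sqrt (((N : ℝ) - s - 1) / ((N : ℝ) - s)) : ℂ))
    (U₂ : ℂ) (hU₂ : U₂ ^ N = β 0)
    (U₁ : ℂ) (hU₁ : U₁ = β 1 / ((Real.sqrt N : ℂ) * U₂ ^ (N - 1))) :
    ∀ n ≤ N, β n = (Real.sqrt (N.choose n) : ℂ) * U₁ ^ n * U₂ ^ (N - n) := by
  have hU₂0 : U₂ ≠ 0 := by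
    intro h; apply hβ0; rw [← hU₂, h, zero_pow (by omega)]
  have hNsqrt : (Real.sqrt N : ℂ) ≠ 0 := by
    have : (0:ℝ) < Real.sqrt N := Real.sqrt_pos.mpr (by positivity)
    exact_mod_cast this.ne'
  have hU₁0 : U₁ ≠ 0 := by
    rw [hU₁]
    exact div_ne_zero hβ1 (mul_ne_zero hNsqrt (pow_ne_zero _ hU₂0))
  intro n
  induction n using Nat.strong_induction_on with
  | _ n ih =>
    intro hn
    match n with
    | 0 => simpa [hU₂] using hU₂.symm
    | 1 =>
      rw [hU₁, Nat.choose_one_right]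
      field_simp
    | (s+2) =>
      have h0 := ih s (by omega) (by omega)
      have h1 := ih (s+1) (by omega) (by omega)
      have hsc : (0:ℝ) < Real.sqrt (N.choose s) :=
        Real.sqrt_pos.mpr (by exact_mod_cast Nat.choose_pos (by omega : s ≤ N))
      have hsc' : ((Real.sqrt (N.choose s) : ℝ) : ℂ) ≠ 0 := by exact_mod_cast hsc.ne'
      obtain ⟨t, ht⟩ : ∃ t, N = s + 2 + t := ⟨N - (s+2), by omega⟩
      have e1 : N - (s+1) = t + 1 := by omega
      have e2 : N - s = t + 2 := by omega
      have e3 : N - (s+2) = t := by omega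
      have ec1 : ((N:ℝ) - s - 1) = ((N - s - 1 : ℕ) : ℝ) := by
        rw [show N - s - 1 = t + 1 by omega]; push_cast [ht]; ring
      have ec2 : ((N:ℝ) - s) = ((N - s : ℕ) : ℝ) := by
        rw [e2]; push_cast [ht]; ring
      have keyR := real_key (N.choose s) (N.choose (s+1)) (N.choose (s+2)) s
          (N - s - 1) (N - s) (Nat.choose_pos (by omega)) (by omega)
          (nat_key N s (by omega))
      have key : ((N.choose (s+1) : ℝ) : ℂ) / (Real.sqrt (N.choose s) : ℂ) *
          (Real.sqrt ((s+1 : ℝ)/(s+2)) : ℂ) *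
          (Real.sqrt (((N-s-1 : ℕ) : ℝ)/((N-s : ℕ) : ℝ)) : ℂ)
          = (Real.sqrt (N.choose (s+2)) : ℂ) := by
        exact_mod_cast congrArg (Complex.ofReal) keyR
      rw [div_mul_eq_mul_div, div_mul_eq_mul_div, div_eq_iff hsc'] at key
      have hsq : ((Real.sqrt (N.choose (s+1)) : ℝ) : ℂ)^2 = ((N.choose (s+1) : ℝ) : ℂ) := by
        have := Real.sq_sqrt (show (0:ℝ) ≤ N.choose (s+1) by positivity)
        exact_mod_cast congrArg Complex.ofReal this
      have hden : ((Real.sqrt (N.choose s) : ℝ) : ℂ) * U₁ ^ s * U₂ ^ (t+2) ≠ 0 :=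
        mul_ne_zero (mul_ne_zero hsc' (pow_ne_zero _ hU₁0)) (pow_ne_zero _ hU₂0)
      rw [hrec s (by omega), h0, h1, e1, e2, e3, ec1, ec2,
        div_mul_eq_mul_div, div_mul_eq_mul_div, div_eq_iff hden,
        mul_pow, mul_pow, hsq]
      linear_combination ((U₁^(s+1))^2 * (U₂^(t+1))^2) * key
end

section
/- Suppose U, V ∈ ℂ^M are unit vectors such that (N!/(n₁!···n_M!))^{1/2}·∏_i U_i^{n_i} = (N!/(n₁!···n_M!))^{1/2}·∏_i V_i^{n_i} · e^{iθ} for a fixed phase θ and all compositions n⃗ of N ≥ 2 into M parts. Then U = e^{iφ}·V for some real φ. -/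
/-- Uniqueness up to global phase of the single-mode vector representation:
if two unit vectors U, V give the same coefficients up to a fixed phase e^{iθ},
then U = e^{iφ}·V for some real φ. -/
theorem stmt_10 (N M : ℕ) (hN : 2 ≤ N) (θ : ℝ)
    (U V : EuclideanSpace ℂ (Fin M)) (hU : ‖U‖ = 1) (hV : ‖V‖ = 1)
    (hcoef : ∀ n : Fin M → ℕ, (∑ i, n i) = N →
      (Real.sqrt (Nat.multinomial Finset.univ n) : ℂ) * ∏ i, U i ^ n i =
      (Real.sqrt (Nat.multinomial Finset.univ n) : ℂ) * (∏ i, V i ^ n i) *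
        Complex.exp (θ * Complex.I)) :
    ∃ φ : ℝ, ∀ i, U i = Complex.exp (φ * Complex.I) * V i := by
  -- cancel the multinomial coefficient
  have hprod : ∀ n : Fin M → ℕ, (∑ i, n i) = N →
      ∏ i, U i ^ n i = (∏ i, V i ^ n i) * Complex.exp (θ * Complex.I) := by
    intro n hn
    have h := hcoef n hn
    have hm : (0:ℝ) < Nat.multinomial Finset.univ n := by
      exact_mod_cast Nat.multinomial_pos _ _
    have hs : (Real.sqrt (Nat.multinomial Finset.univ n) : ℂ) ≠ 0 := by
      simp only [ne_eq, Complex.ofReal_eq_zero]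
      positivity
    exact mul_left_cancel₀ hs (h.trans (mul_assoc _ _ _))
  -- product of powers supported at one point
  have h1 : ∀ (W : Fin M → ℂ) (j : Fin M) (a : ℕ),
      ∏ k, W k ^ (if k = j then a else 0) = W j ^ a := by
    intro W j a
    rw [Finset.prod_eq_single j]
    · simp
    · intro k _ hk; simp [hk]
    · simp
  -- find j with V j ≠ 0
  obtain ⟨j, hVj⟩ : ∃ j, V j ≠ 0 := by
    by_contra h
    push_neg at h
    have : V = 0 := by
      ext k; exact h k
    rw [this] at hV
    simp at hV
  -- the N-th power relation at j
  have hUjN : U j ^ N = V j ^ N * Complex.exp (θ * Complex.I) := by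
    have := hprod (fun k => if k = j then N else 0) (by simp)
    rwa [h1, h1] at this
  have he : Complex.exp (θ * Complex.I) ≠ 0 := Complex.exp_ne_zero _
  have hUj0 : U j ≠ 0 := by
    intro h
    rw [h, zero_pow (by omega)] at hUjN
    exact (mul_ne_zero (pow_ne_zero _ hVj) he) hUjN.symm
  set c : ℂ := U j / V j with hc
  have hc0 : c ≠ 0 := div_ne_zero hUj0 hVj
  have hUjc : U j = c * V j := (div_mul_cancel₀ _ hVj).symm
  have hcN : c ^ N = Complex.exp (θ * Complex.I) := by
    rw [hc, div_pow, hUjN]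
    field_simp
  -- |c| = 1
  have habs : ‖c‖ = 1 := by
    have h1 : ‖c‖ ^ N = 1 := by
      rw [← norm_pow, hcN, Complex.norm_exp]
      simp
    have hnn := norm_nonneg c
    rcases lt_trichotomy ‖c‖ 1 with h | h | h
    · have := pow_lt_one₀ (n := N) hnn h (by omega)
      rw [h1] at this; exact absurd this (lt_irrefl 1)
    · exact h
    · have := one_lt_pow₀ (n := N) h (by omega)
      rw [h1] at this; exact absurd this (lt_irrefl 1)
  -- main claim : U i = c * V i for all i
  have hmain : ∀ i, U i = c * V i := by
    intro i
    by_cases hij : i = j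
    · rw [hij]; exact hUjc
    · have hsum : (∑ k, ((if k = i then 1 else 0) + (if k = j then N - 1 else 0))) = N := by
        rw [Finset.sum_add_distrib, Finset.sum_ite_eq', Finset.sum_ite_eq']
        simp; omega
      have h2 := hprod (fun k => (if k = i then 1 else 0) + (if k = j then N - 1 else 0)) hsum
      simp only [pow_add, Finset.prod_mul_distrib, h1] at h2
      -- h2 : U i ^ 1 * U j ^ (N-1) = V i ^ 1 * V j ^ (N-1) * exp(θI)
      rw [pow_one, pow_one, hUjc, mul_pow, ← hcN] at h2
      have hNe : N = (N - 1) + 1 := by omega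
      rw [hNe, pow_succ] at h2
      simp only [Nat.add_sub_cancel] at h2
      have hkey : U i * (c ^ (N-1) * V j ^ (N-1)) =
          (c * V i) * (c ^ (N-1) * V j ^ (N-1)) := by
        rw [← mul_assoc] at h2 ⊢
        rw [h2]; ring
      have hnz : c ^ (N-1) * V j ^ (N-1) ≠ 0 :=
        mul_ne_zero (pow_ne_zero _ hc0) (pow_ne_zero _ hVj)
      exact mul_right_cancel₀ hnz hkey
  refine ⟨Complex.arg c, fun i => ?_⟩
  have := Complex.norm_mul_exp_arg_mul_I c
  rw [habs, Complex.ofReal_one, one_mul] at this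
  rw [this]; exact hmain i
end
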